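/- Let X be a random variable with E[X] = -a < 0 and A_t := E[|X|^t] < ∞ for some t ∈ (1, 2]. If y > 0 satisfies y^{t-1} ≥ (e-1) A_t / a, then h_0 := (1/y) log(1 + a y^{t-1} / A_t) satisfies E[e^{h_0 X} 1_{X ≤ y}] ≤ 1. -/

import Mathlib

/-! For `h ≥ 0`, `x ≤ y` and `1 ≤ t ≤ 2` one has `e^{hx} ≤ 1 + hx + (e^{hy} - 1)(|x|/y)^t`:
for `|x| ≤ y` because `(e^u - 1 - u)/u²` is increasing and `(x/y)² ≤ (|x|/y)^t`, and for
`x < -y` because `e^{hx} ≤ 1 ≤ 1 + hx + h|x|`. Integrating gives the Fuk–Nagaev bound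
`E[e^{hX}; X ≤ y] ≤ 1 - ha + A_t (e^{hy} - 1)/y^t`. For `h₀ y = log(1 + r)` with
`r = a y^{t-1}/A_t ≥ e - 1` its right-hand side is `1 + a (1 - log(1 + r))/y ≤ 1`. -/

open MeasureTheory ProbabilityTheory Real

theorem exp_le_one_add_add_sq_div_two_of_nonpos {x : ℝ} (hx : x ≤ 0) :
    exp x ≤ 1 + x + x ^ 2 / 2 := by
  have hmono : Monotone fun u : ℝ => exp u - 1 - u - u ^ 2 / 2 := by
    refine monotone_of_hasDerivAt_nonneg (f' := fun u => exp u - 1 - u) (fun u => ?_)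
      (fun u => sub_nonneg.2 (by linarith [add_one_le_exp u]))
    exact ((((hasDerivAt_exp u).sub_const 1).sub (hasDerivAt_id u)).sub
      ((hasDerivAt_pow 2 u).div_const 2)).congr_deriv (by simp)
  have := hmono hx
  simp only [exp_zero] at this
  linarith

theorem two_mul_exp_sub_one_sub_le {x : ℝ} (hx : 0 ≤ x) :
    2 * (exp x - 1 - x) ≤ x * (exp x - 1) := by
  have hmono : Monotone fun u : ℝ => u * (exp u - 1) - 2 * (exp u - 1 - u) := by
    refine monotone_of_hasDerivAt_nonneg (f' := fun u => (u - 1) * exp u + 1) (fun u => ?_)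
      (fun u => ?_)
    · exact (((hasDerivAt_id u).mul ((hasDerivAt_exp u).sub_const 1)).sub
        ((((hasDerivAt_exp u).sub_const 1).sub (hasDerivAt_id u)).const_mul 2)).congr_deriv
        (by simp only [one_mul, id_eq]; ring)
    · have h := mul_le_mul_of_nonneg_right (add_one_le_exp (-u)) (exp_pos u).le
      rw [← exp_add, neg_add_cancel, exp_zero] at h
      show 0 ≤ (u - 1) * exp u + 1
      linarith
  simpa using hmono hx

theorem monotoneOn_exp_sub_one_sub_div_sq :
    MonotoneOn (fun x : ℝ => (exp x - 1 - x) / x ^ 2) (Set.Ioi 0) := by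
  refine monotoneOn_of_hasDerivWithinAt_nonneg (convex_Ioi 0)
    (f' := fun x => ((exp x - 1) * x ^ 2 - (exp x - 1 - x) * (2 * x)) / (x ^ 2) ^ 2) ?_ ?_ ?_
  · exact ContinuousOn.div (by fun_prop) (by fun_prop) fun x (hx : 0 < x) => by positivity
  · intro x hx
    rw [interior_Ioi] at hx
    have hx : 0 < x := hx
    exact ((((hasDerivAt_exp x).sub_const 1).sub (hasDerivAt_id x)).div
      (hasDerivAt_pow 2 x) (by positivity)).hasDerivWithinAt.congr_deriv (by simp)
  · intro x hx
    rw [interior_Ioi] at hx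
    have hx : 0 < x := hx
    have := two_mul_exp_sub_one_sub_le hx.le
    apply div_nonneg _ (by positivity)
    nlinarith

theorem exp_sub_one_sub_mul_sq_le {u v : ℝ} (huv : u ≤ v) (hv : 0 ≤ v) :
    (exp u - 1 - u) * v ^ 2 ≤ (exp v - 1 - v) * u ^ 2 := by
  rcases le_or_gt u 0 with hu | hu
  · have hu' := exp_le_one_add_add_sq_div_two_of_nonpos hu
    have hv' := quadratic_le_exp_of_nonneg hv
    nlinarith [mul_le_mul_of_nonneg_right hv' (sq_nonneg u),
      mul_le_mul_of_nonneg_right hu' (sq_nonneg v)]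
  · have hv : 0 < v := hu.trans_le huv
    have h := monotoneOn_exp_sub_one_sub_div_sq hu hv huv
    rwa [div_le_div_iff₀ (by positivity) (by positivity)] at h

theorem exp_mul_le_one_add_mul_add_abs_div_rpow {h x y t : ℝ} (hh : 0 ≤ h) (hy : 0 < y)
    (ht1 : 1 ≤ t) (ht2 : t ≤ 2) (hxy : x ≤ y) :
    exp (h * x) ≤ 1 + h * x + (exp (h * y) - 1) * (|x| / y) ^ t := by
  have hexp : h * y ≤ exp (h * y) - 1 := by linarith [add_one_le_exp (h * y)]
  rcases le_or_gt (-y) x with hx | hx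
  · have hxy' : |x| / y ≤ 1 := div_le_one_of_le₀ (abs_le.2 ⟨hx, hxy⟩) hy.le
    have hsq : (x / y) ^ 2 ≤ (|x| / y) ^ t := by
      calc (x / y) ^ 2 = (|x| / y) ^ (2 : ℝ) := by rw [rpow_two, div_pow, div_pow, sq_abs]
        _ ≤ (|x| / y) ^ t := rpow_le_rpow_of_exponent_ge' (by positivity) hxy' (by linarith) ht2
    have hquad : exp (h * x) - 1 - h * x ≤ (exp (h * y) - 1 - h * y) * (x / y) ^ 2 := by
      rcases hh.eq_or_lt with rfl | hpos
      · simp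
      have := exp_sub_one_sub_mul_sq_le (mul_le_mul_of_nonneg_left hxy hh) (by positivity)
      rw [div_pow, mul_div_assoc', le_div_iff₀ (by positivity)]
      rw [mul_pow, mul_pow] at this
      refine le_of_mul_le_mul_left ?_ (by positivity : 0 < h ^ 2)
      linarith
    nlinarith [mul_le_mul_of_nonneg_left hsq (sub_nonneg.2 hexp),
      mul_nonneg (mul_nonneg hh hy.le) (rpow_nonneg (by positivity : 0 ≤ |x| / y) t)]
  · have hx1 : 1 ≤ |x| / y := by
      rw [le_div_iff₀ hy, one_mul, abs_of_neg (by linarith)]; linarith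
    have hlin : h * y * (|x| / y) ≤ (exp (h * y) - 1) * (|x| / y) ^ t :=
      mul_le_mul hexp (self_le_rpow_of_one_le hx1 ht1) (by positivity)
        ((mul_nonneg hh hy.le).trans hexp)
    have hcancel : h * y * (|x| / y) = -(h * x) := by
      rw [abs_of_neg (by linarith)]; field_simp
    rw [hcancel] at hlin
    have : exp (h * x) ≤ 1 := exp_le_one_iff.2 (mul_nonpos_of_nonneg_of_nonpos hh (by linarith))
    linarith

theorem setIntegral_exp_mul_le {Ω : Type*} [MeasurableSpace Ω] {μ : Measure Ω}
    [IsProbabilityMeasure μ] {X : Ω → ℝ} (hint : Integrable X μ) {t : ℝ} (ht1 : 1 ≤ t)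
    (ht2 : t ≤ 2) (hintt : Integrable (fun ω => |X ω| ^ t) μ) {h y : ℝ} (hh : 0 ≤ h)
    (hy : 0 < y) :
    ∫ ω in {ω | X ω ≤ y}, exp (h * X ω) ∂μ
      ≤ 1 + h * ∫ ω, X ω ∂μ + (∫ ω, |X ω| ^ t ∂μ) * (exp (h * y) - 1) / y ^ t := by
  have hbound (ω : Ω) :
      {ω | X ω ≤ y}.indicator (fun ω => exp (h * X ω)) ω
        ≤ 1 + h * X ω + (exp (h * y) - 1) * (|X ω| ^ t / y ^ t) := by
    rw [← div_rpow (abs_nonneg _) hy.le, Set.indicator_apply]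
    split_ifs with hω
    · exact exp_mul_le_one_add_mul_add_abs_div_rpow hh hy ht1 ht2 hω
    · have : 0 ≤ exp (h * y) - 1 := by linarith [one_le_exp (mul_nonneg hh hy.le)]
      have : 0 < X ω := hy.trans (not_le.1 hω)
      positivity
  have hint₁ : Integrable (fun ω => 1 + h * X ω) μ :=
    (integrable_const 1).add (hint.const_mul h)
  have hint₂ : Integrable (fun ω => (exp (h * y) - 1) * (|X ω| ^ t / y ^ t)) μ :=
    (hintt.div_const _).const_mul _
  rw [← integral_indicator₀ (nullMeasurableSet_le hint.1.aemeasurable aemeasurable_const)]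
  calc _ ≤ ∫ ω, 1 + h * X ω + (exp (h * y) - 1) * (|X ω| ^ t / y ^ t) ∂μ :=
        integral_mono_of_nonneg
          (ae_of_all _ fun ω => Set.indicator_nonneg (fun _ _ => (exp_pos _).le) ω)
          (hint₁.add hint₂) (ae_of_all _ hbound)
    _ = _ := by
      rw [integral_add hint₁ hint₂, integral_add (integrable_const 1) (hint.const_mul h),
        integral_const_mul, integral_const_mul, integral_div, integral_const, probReal_univ]
      ring

theorem mul_exp_sub_one_div_rpow_le_mul {a A t y h : ℝ} (ha : 0 < a) (hA : 0 ≤ A) (hy : 0 < y)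
    (hcond : (exp 1 - 1) * A / a ≤ y ^ (t - 1))
    (hhy : h * y = log (1 + a * y ^ (t - 1) / A)) :
    A * (exp (h * y) - 1) / y ^ t ≤ h * a := by
  -- For `A = 0` the junk value `a y^(t-1) / 0 = 0` forces `h = 0`.
  rcases hA.eq_or_lt with rfl | hA
  · simp [show h = 0 by simpa [hy.ne'] using hhy]
  have hr : exp 1 - 1 ≤ a * y ^ (t - 1) / A := by
    rw [div_le_iff₀ ha] at hcond
    rw [le_div_iff₀ hA]
    linarith
  have hL : 1 ≤ h * y := by
    rw [hhy, le_log_iff_exp_le (by positivity)]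
    linarith
  have hyt : y ^ t = y ^ (t - 1) * y := by
    rw [← rpow_add_one hy.ne', sub_add_cancel]
  rw [hhy, exp_log (by positivity), add_sub_cancel_left, hyt]
  calc A * (a * y ^ (t - 1) / A) / (y ^ (t - 1) * y) = a / y := by
        field_simp
    _ ≤ h * a := by
        rw [div_le_iff₀ hy]; nlinarith

theorem stmt_4_general {Ω : Type*} [MeasureSpace Ω] [IsProbabilityMeasure (ℙ : Measure Ω)]
    (X : Ω → ℝ) (hint : Integrable X ℙ)
    (a : ℝ) (ha : 0 < a) (hmean : ∫ ω, X ω ∂ℙ = -a)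
    (t : ℝ) (ht1 : 1 < t) (ht2 : t ≤ 2)
    (At : ℝ) (hAt : ∫ ω, |X ω| ^ t ∂ℙ = At)
    (hintt : Integrable (fun ω => |X ω| ^ t) ℙ)
    (y : ℝ) (hy : 0 < y)
    (hcond : (Real.exp 1 - 1) * At / a ≤ y ^ (t - 1)) :
    (∫ ω in {ω | X ω ≤ y},
        Real.exp ((1 / y) * Real.log (1 + a * y ^ (t - 1) / At) * X ω) ∂ℙ) ≤ 1 := by
  have hAt0 : 0 ≤ At := hAt ▸ integral_nonneg fun _ => by positivity
  set h := 1 / y * log (1 + a * y ^ (t - 1) / At)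
  have hh : 0 ≤ h :=
    mul_nonneg (by positivity) (log_nonneg (le_add_of_nonneg_right (by positivity)))
  have hbound := setIntegral_exp_mul_le hint ht1.le ht2 hintt hh hy
  rw [hmean, hAt] at hbound
  have hexponent : At * (exp (h * y) - 1) / y ^ t ≤ h * a :=
    mul_exp_sub_one_div_rpow_le_mul ha hAt0 hy hcond (by simp only [h]; field_simp)
  linarith

/-- If `E[X] = -a < 0`, `A_t = E[|X|^t] < ∞` for `t ∈ (1,2]`, and `y^{t-1} ≥ (e-1)A_t/a`,
then `h_0 = (1/y) log(1 + a y^{t-1}/A_t)` satisfies `E[e^{h_0 X} 1_{X ≤ y}] ≤ 1`. -/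
theorem stmt_4 {Ω : Type*} [MeasureSpace Ω] [IsProbabilityMeasure (ℙ : Measure Ω)]
    (X : Ω → ℝ) (hX : Measurable X) (hint : Integrable X ℙ)
    (a : ℝ) (ha : 0 < a) (hmean : ∫ ω, X ω ∂ℙ = -a)
    (t : ℝ) (ht1 : 1 < t) (ht2 : t ≤ 2)
    (At : ℝ) (hAt : ∫ ω, |X ω| ^ t ∂ℙ = At)
    (hintt : Integrable (fun ω => |X ω| ^ t) ℙ)
    (y : ℝ) (hy : 0 < y)
    (hcond : (Real.exp 1 - 1) * At / a ≤ y ^ (t - 1)) :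
    (∫ ω in {ω | X ω ≤ y},
        Real.exp ((1 / y) * Real.log (1 + a * y ^ (t - 1) / At) * X ω) ∂ℙ) ≤ 1 :=
  stmt_4_general X hint a ha hmean t ht1 ht2 At hAt hintt y hy hcond
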